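/- arXiv:1910.00586 — 2 statements merged into one kernel-verified Lean document; each statement's English description precedes it below -/
import Mathlib

section
/- Let C be a Hermitian n×n circulant matrix (n even) satisfying c₀ = d with d a nonnegative integer, |c_j| = 1 for j = 1,…,n−1, and C C* = (d² + n − 1) I. If n − 1 is prime, then d = n/2 − 1. -/
/-!
The vectors `k ↦ ψ (a * k)` for the standard additive character `ψ` of `ZMod n` are eigenvectors
of the circulant `C`, with eigenvalues `μ a = ∑ j, c j * ψ (a * j)`. As `C` is Hermitian,
`C ^ 2 = N • 1` with `N = d ^ 2 + n - 1`, so `μ a ^ 2 = N` and every product `μ a * μ b` is `± N`.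
Character orthogonality gives `∑ a, μ a = n * d` and, using `|c j| = 1`,
`∑ a, μ a * μ (a + 1) = n * (d ^ 2 - 1)`. If `d = 0` the second identity makes `n - 1` divide `n`,
which is absurd. If `d > 0` the first makes `√N = ± μ 0` rational, so `d ^ 2 + (n - 1) = e ^ 2`,
and `(e - d) * (e + d) = n - 1` prime forces `e - d = 1`, `e + d = n - 1`.
-/

open Matrix Complex Finset

theorem circulant_apply_neg_of_isHermitian {G : Type*} [AddGroup G] {c : G → ℂ}
    {C : Matrix G G ℂ} (hC : ∀ j k, C j k = c (k - j)) (hH : C.IsHermitian) (j : G) :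
    c (-j) = star (c j) := by
  simpa [hC] using (hH.apply j 0).symm

section CirculantEigenvalue

variable {R : Type*} [CommRing R] [Fintype R]

def circulantEigenvalue (ψ : AddChar R ℂ) (c : R → ℂ) (a : R) : ℂ :=
  ∑ j, c j * ψ (a * j)

variable {ψ : AddChar R ℂ} {c : R → ℂ} {C : Matrix R R ℂ}

theorem circulant_mulVec_mulShift (hC : ∀ j k, C j k = c (k - j)) (a : R) :
    C *ᵥ (fun k => ψ (a * k)) = circulantEigenvalue ψ c a • fun k => ψ (a * k) := by
  ext j
  simp only [mulVec, dotProduct, hC, Pi.smul_apply, smul_eq_mul, circulantEigenvalue, sum_mul]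
  refine Fintype.sum_equiv (Equiv.subRight j) _ _ fun k => ?_
  rw [Equiv.subRight_apply, mul_assoc, ← AddChar.map_add_eq_mul, ← mul_add, sub_add_cancel]

theorem circulantEigenvalue_sq [DecidableEq R] (hC : ∀ j k, C j k = c (k - j)) {N : ℂ}
    (hCC : C * C = N • (1 : Matrix R R ℂ)) (a : R) :
    circulantEigenvalue ψ c a ^ 2 = N := by
  have h := congrFun (congrArg (· *ᵥ fun k => ψ (a * k)) hCC) 0
  simp only [← mulVec_mulVec, circulant_mulVec_mulShift hC, mulVec_smul, smul_mulVec,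
    one_mulVec, Pi.smul_apply, mul_zero, AddChar.map_zero_eq_one, smul_eq_mul, mul_one] at h
  rw [sq, h]

variable [DecidableEq R]

theorem sum_circulantEigenvalue (hψ : ψ.IsPrimitive) :
    ∑ a, circulantEigenvalue ψ c a = Fintype.card R * c 0 := by
  simp only [circulantEigenvalue]
  rw [sum_comm]
  simp_rw [← mul_sum, AddChar.sum_mulShift _ hψ]
  simp [mul_comm]

theorem sum_circulantEigenvalue_mul_add (hψ : ψ.IsPrimitive) (b : R) :
    ∑ a, circulantEigenvalue ψ c a * circulantEigenvalue ψ c (a + b) =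
      Fintype.card R * ∑ j, c j * c (-j) * ψ (b * -j) := by
  have hchar (a j k : R) : ψ (a * j) * ψ ((a + b) * k) = ψ (b * k) * ψ (a * (j + k)) := by
    rw [← AddChar.map_add_eq_mul, ← AddChar.map_add_eq_mul]
    ring_nf
  calc ∑ a, circulantEigenvalue ψ c a * circulantEigenvalue ψ c (a + b)
      = ∑ j, ∑ k, c j * c k * ψ (b * k) * ∑ a, ψ (a * (j + k)) := by
        simp_rw [circulantEigenvalue, sum_mul_sum, mul_sum]
        rw [sum_comm]
        refine sum_congr rfl fun j _ => ?_
        rw [sum_comm]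
        refine sum_congr rfl fun k _ => sum_congr rfl fun a _ => ?_
        rw [mul_mul_mul_comm, hchar]
        ring
    _ = ∑ j, c j * c (-j) * ψ (b * -j) * Fintype.card R := by
        refine sum_congr rfl fun j _ => ?_
        simp [AddChar.sum_mulShift _ hψ, add_eq_zero_iff_eq_neg']
    _ = _ := by rw [mul_sum]; simp_rw [mul_comm (Fintype.card R : ℂ)]

theorem sum_mul_neg_mul_eq_sq_sub_one (hψ : ψ.IsPrimitive) (hc : ∀ j, c (-j) = star (c j))
    (hunit : ∀ j, j ≠ 0 → ‖c j‖ = 1) {b : R} (hb : b ≠ 0) :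
    ∑ j, c j * c (-j) * ψ (b * -j) = c 0 ^ 2 - 1 := by
  have hprod (j : R) : c j * c (-j) = (if j = 0 then c 0 ^ 2 - 1 else 0) + 1 := by
    split_ifs with hj
    · rw [hj, neg_zero]; ring
    · rw [hc, ← starRingEnd_apply, Complex.mul_conj', hunit j hj]; simp
  have hchar : ∑ j, ψ (b * -j) = 0 :=
    calc ∑ j, ψ (b * -j) = ∑ j, ψ (j * b) :=
          Fintype.sum_equiv (Equiv.neg R) _ _ fun j => by simp [mul_comm]
      _ = 0 := by simp [AddChar.sum_mulShift b hψ, hb]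
  simp_rw [hprod, add_mul, sum_add_distrib, one_mul, hchar, ite_mul, zero_mul]
  simp

end CirculantEigenvalue

theorem mul_mem_zmultiples_of_sq_eq {R : Type*} [CommRing R] [NoZeroDivisors R] {N x y : R}
    (hx : x ^ 2 = N) (hy : y ^ 2 = N) : x * y ∈ AddSubgroup.zmultiples N := by
  have : (x * y) ^ 2 = N ^ 2 := by rw [mul_pow, hx, hy, sq]
  rcases sq_eq_sq_iff_eq_or_eq_neg.mp this with h | h <;> rw [h]
  · exact AddSubgroup.mem_zmultiples N
  · exact neg_mem (AddSubgroup.mem_zmultiples N)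

theorem sum_mul_mem_zmultiples_of_sq_eq {R ι : Type*} [CommRing R] [NoZeroDivisors R] [Fintype ι]
    {N : R} {x : ι → R} (hx : ∀ a, x a ^ 2 = N) (σ : ι → ι) :
    ∑ a, x a * x (σ a) ∈ AddSubgroup.zmultiples N :=
  sum_mem fun a _ => mul_mem_zmultiples_of_sq_eq (hx a) (hx (σ a))

theorem isSquare_of_sq_eq_of_mul_mem_zmultiples {K : Type*} [Field K] [CharZero K] {N m : ℕ}
    {x : K} (hx : x ^ 2 = N) (hm : m ≠ 0) (h : m * x ∈ AddSubgroup.zmultiples (N : K)) :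
    IsSquare N := by
  obtain ⟨k, hk⟩ := h
  have hxq : x = ((k * N / m : ℚ) : K) := by
    push_cast
    rw [eq_div_iff (by exact_mod_cast hm), ← zsmul_eq_mul, mul_comm]
    exact hk.symm
  refine Rat.isSquare_natCast_iff.mp ⟨k * N / m, ?_⟩
  exact_mod_cast (hxq ▸ hx).symm.trans (sq _)

theorem Nat.Prime.two_mul_add_one_eq_of_isSquare {p d : ℕ} (hp : p.Prime)
    (h : IsSquare (d ^ 2 + p)) : 2 * d + 1 = p := by
  obtain ⟨e, he⟩ := h
  have hde : d < e := by nlinarith [hp.pos]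
  have hfact : (e + d) * (e - d) = p := by
    rw [← Nat.sq_sub_sq, sq e, ← he, Nat.add_sub_cancel_left]
  rcases hp.eq_one_or_self_of_dvd _ (Dvd.intro _ hfact) with h | h
  · rw [h, one_mul] at hfact
    have := hp.two_le
    omega
  · have : e - d = 1 := Nat.eq_of_mul_eq_mul_left hp.pos (by rw [mul_one, ← h, hfact, h])
    omega

theorem Nat.Prime.neg_succ_notMem_zmultiples {K : Type*} [Ring K] [CharZero K] {p : ℕ}
    (hp : p.Prime) : -((p + 1 : ℕ) : K) ∉ AddSubgroup.zmultiples (p : K) := by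
  rintro ⟨k, hk⟩
  simp only [zsmul_eq_mul] at hk
  have hk' : k * p = -((p + 1 : ℕ) : ℤ) := by exact_mod_cast hk
  have : p ∣ p + 1 := Int.natCast_dvd_natCast.mp ⟨-k, by linarith⟩
  exact hp.not_dvd_one ((Nat.dvd_add_right dvd_rfl).mp this)

theorem stmt8_general (n : ℕ) [NeZero n]
    (c : ZMod n → ℂ) (C : Matrix (ZMod n) (ZMod n) ℂ)
    (hC : ∀ j k, C j k = c (k - j))
    (d : ℕ)  (hc0 : c 0 = (d : ℂ))
    (hunit : ∀ j : ZMod n, j ≠ 0 → ‖c j‖ = 1)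
    (hHerm : C.IsHermitian)
    (horth : C * C.conjTranspose = (((d : ℝ) ^ 2 + n - 1 : ℝ) : ℂ) • 1)
    (hp : Nat.Prime (n - 1)) :
    d = n / 2 - 1 := by
  obtain ⟨p, rfl⟩ := Nat.exists_eq_add_one_of_ne_zero (NeZero.ne n)
  rw [Nat.add_sub_cancel] at hp
  set ψ := ZMod.stdAddChar (N := p + 1)
  have hψ : ψ.IsPrimitive := ZMod.isPrimitive_stdAddChar _
  set μ := circulantEigenvalue ψ c
  have hsq : ∀ a, μ a ^ 2 = ((d ^ 2 + p : ℕ) : ℂ) := circulantEigenvalue_sq hC <| by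
    rw [hHerm.eq] at horth
    convert horth using 3
    push_cast
    ring
  have hprod := sum_mul_mem_zmultiples_of_sq_eq hsq
  rcases Nat.eq_zero_or_pos d with rfl | hd
  · have : Fact (1 < p + 1) := ⟨Nat.succ_lt_succ hp.pos⟩
    have h := hprod (· + 1)
    rw [sum_circulantEigenvalue_mul_add hψ, sum_mul_neg_mul_eq_sq_sub_one hψ
      (circulant_apply_neg_of_isHermitian hC hHerm) hunit one_ne_zero, hc0, ZMod.card] at h
    exact absurd (by simpa using h) (hp.neg_succ_notMem_zmultiples (K := ℂ))
  · have h := hprod fun _ => 0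
    rw [← sum_mul, sum_circulantEigenvalue hψ, ZMod.card, hc0] at h
    have hsquare : IsSquare (d ^ 2 + p) :=
      isSquare_of_sq_eq_of_mul_mem_zmultiples (hsq 0) (m := (p + 1) * d) (by positivity)
        (by exact_mod_cast h)
    have := hp.two_mul_add_one_eq_of_isSquare hsquare
    omega

theorem stmt8 (n : ℕ) [NeZero n] (hn : 2 ≤ n) (hne : Even n)
    (c : ZMod n → ℂ) (C : Matrix (ZMod n) (ZMod n) ℂ)
    (hC : ∀ j k, C j k = c (k - j))
    (d : ℕ)  (hc0 : c 0 = (d : ℂ))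
    (hunit : ∀ j : ZMod n, j ≠ 0 → ‖c j‖ = 1)
    (hHerm : C.IsHermitian)
    (horth : C * C.conjTranspose = (((d : ℝ) ^ 2 + n - 1 : ℝ) : ℂ) • 1)
    (hp : Nat.Prime (n - 1)) :
    d = n / 2 - 1 :=
  stmt8_general n c C hC d hc0 hunit hHerm horth hp
end

section
/- Let C be a Hermitian n×n circulant matrix satisfying c₀ = d with d a nonnegative integer, |c_j| = 1 for j = 1,…,n−1, and C C* = (d² + n − 1) I. If n/2 is prime, then n = 2d + 2. -/
/-!
The vectors `k ↦ e(-km)` diagonalise `C`, with eigenvalues `λₘ = 𝓕 c m`. Since `C² = K·I` with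
`K = d² + n - 1`, every `λₘ² = K`, so `λₘ = sₘ λ₀` with signs `sₘ = ±1`. The trace identity
`∑ λₘ = n d` then gives `T² K = n² d²` with `T = ∑ sₘ`, and the shifted Parseval identity
`∑ λₘ λₘ₊₁ = n ∑ |cⱼ|² e(-j) = n (d² - 1)` gives `K ∣ n (d² - 1) = n (K - n)`, i.e. `K ∣ n²`.
The `(0, 1)` entry of `C² = K·I` together with the triangle inequality gives `2d + 2 ≤ n`.
For `n = 2p` the bound forces `p < K ≤ p²`, so `K ∈ {4, 2p, 4p, p²}` among the divisors of `4p²`;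
`T² K = 4p²d²` makes `K = 2p` or `4p` impossible unless `p = 2`, and `K = p²` means `p = d + 1`.
-/

open Matrix Complex

open ZMod Finset ComplexConjugate

section Fourier

variable {N : ℕ} [NeZero N]

lemma sum_dft (a : ZMod N → ℂ) : ∑ m, 𝓕 a m = N * a 0 := by
  simpa using (dft_apply_zero _).symm.trans (congrFun (dft_dft a) 0)

lemma sum_dft_mul_dft (a b : ZMod N → ℂ) :
    ∑ m, 𝓕 a m * 𝓕 b m = N * ∑ j, a (-j) * b j := by
  calc ∑ m, 𝓕 a m * 𝓕 b m = ∑ j, (∑ m, stdAddChar (-(j * m)) * 𝓕 a m) * b j := by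
        simp only [dft_apply b, smul_eq_mul, mul_sum, sum_mul]
        rw [sum_comm]
        exact sum_congr rfl fun _ _ => sum_congr rfl fun _ _ => by ring
    _ = ∑ j, 𝓕 (𝓕 a) j * b j := sum_congr rfl fun j _ => by
        simp only [dft_apply (𝓕 a), smul_eq_mul, mul_comm _ j]
    _ = N * ∑ j, a (-j) * b j := by simp [dft_dft, mul_sum, mul_assoc]

lemma dft_apply_add (b : ZMod N → ℂ) (m k : ZMod N) :
    𝓕 b (m + k) = 𝓕 (fun j => stdAddChar (-(j * k)) * b j) m := by
  simp only [dft_apply, smul_eq_mul, ← mul_assoc, ← AddChar.map_add_eq_mul]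
  congr! 3
  ring

lemma sum_stdAddChar_neg [Fact (1 < N)] : ∑ j : ZMod N, stdAddChar (-j) = 0 := by
  rw [Fintype.sum_equiv (Equiv.neg (ZMod N)) (fun j => stdAddChar (-j)) stdAddChar fun _ => rfl]
  exact AddChar.sum_eq_zero_of_ne_one (by simpa using isPrimitive_stdAddChar N one_ne_zero)

lemma sum_dft_mul_dft_add_one [Fact (1 < N)] {c : ZMod N → ℂ}
    (hconj : ∀ j, c (-j) = conj (c j)) {d : ℕ} (hc0 : c 0 = d)
    (hunit : ∀ j, j ≠ 0 → ‖c j‖ = 1) :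
    ∑ m, 𝓕 c m * 𝓕 c (m + 1) = N * (d ^ 2 - 1) := by
  simp_rw [dft_apply_add c _ 1, sum_dft_mul_dft, mul_one]
  congr 1
  have hnormSq (j : ZMod N) : c (-j) * c j = 1 + if j = 0 then (d ^ 2 - 1 : ℂ) else 0 := by
    rw [hconj, conj_mul']
    split_ifs with hj
    · simp [hj, hc0]
    · simp [hunit j hj]
  calc ∑ j, c (-j) * (stdAddChar (-j) * c j)
      = ∑ j, stdAddChar (-j) * (1 + if j = 0 then (d ^ 2 - 1 : ℂ) else 0) :=
        sum_congr rfl fun j _ => by rw [← hnormSq]; ring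
    _ = d ^ 2 - 1 := by simp [mul_add, sum_add_distrib, sum_stdAddChar_neg]

end Fourier

lemma apply_neg_eq_conj_of_isHermitian {G : Type*} [AddGroup G] {c : G → ℂ} {C : Matrix G G ℂ}
    (hC : ∀ j k, C j k = c (k - j)) (hHerm : C.IsHermitian) (j : G) : c (-j) = conj (c j) := by
  simpa [hC] using (congrFun (congrFun hHerm.eq j) 0).symm

lemma two_mul_norm_add_two_le_card {G : Type*} [AddCommGroup G] [Fintype G] [DecidableEq G]
    {c : G → ℂ} {g : G} (hg : g ≠ 0) (hunit : ∀ j, j ≠ 0 → ‖c j‖ = 1)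
    (hsum : ∑ l, c l * c (g - l) = 0) : 2 * ‖c 0‖ + 2 ≤ Fintype.card G := by
  have hsplit := sum_sdiff (subset_univ {0, g}) (f := fun l => c l * c (g - l))
  rw [hsum, sum_pair hg.symm, sub_zero, sub_self] at hsplit
  have hcard : #(univ \ {0, g}) + 2 = Fintype.card G := by
    rw [card_sdiff_of_subset (subset_univ _), card_pair hg.symm, card_univ,
      Nat.sub_add_cancel (by simpa using card_pair hg.symm ▸ card_le_univ {0, g})]
  have hrest : ‖∑ l ∈ univ \ {0, g}, c l * c (g - l)‖ ≤ #(univ \ {0, g}) := by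
    calc _ ≤ ∑ l ∈ univ \ {0, g}, ‖c l * c (g - l)‖ := norm_sum_le _ _
      _ = #(univ \ {0, g}) := by
        rw [card_eq_sum_ones, Nat.cast_sum, Nat.cast_one]
        refine sum_congr rfl fun l hl => ?_
        simp only [mem_sdiff, mem_insert, mem_singleton, mem_univ, true_and, not_or] at hl
        rw [norm_mul, hunit l hl.1, hunit (g - l) (sub_ne_zero.mpr (Ne.symm hl.2)), one_mul]
  have hends : ‖c 0 * c g + c g * c 0‖ = 2 * ‖c 0‖ := by
    rw [mul_comm (c g), ← two_mul, norm_mul, norm_mul, hunit g hg, RCLike.norm_ofNat, mul_one]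
  rw [eq_neg_of_add_eq_zero_left hsplit, norm_neg, hends] at hrest
  exact_mod_cast hcard ▸ (by push_cast; linarith : 2 * ‖c 0‖ + 2 ≤ ((#(univ \ {0, g}) + 2 : ℕ) : ℝ))

lemma exists_intCast_mul_of_sq_eq_sq {R : Type*} [CommRing R] [NoZeroDivisors R] {a b : R}
    (h : a ^ 2 = b ^ 2) : ∃ s : ℤ, a = s * b := by
  rcases sq_eq_sq_iff_eq_or_eq_neg.mp h with h | h
  · exact ⟨1, by simp [h]⟩
  · exact ⟨-1, by simp [h]⟩

section Circulant

variable {N : ℕ} [NeZero N] {c : ZMod N → ℂ} {C : Matrix (ZMod N) (ZMod N) ℂ}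

lemma mulVec_stdAddChar_eq_dft_smul (hC : ∀ j k, C j k = c (k - j)) (m : ZMod N) :
    C *ᵥ (fun k => stdAddChar (-(k * m))) = 𝓕 c m • fun k => stdAddChar (-(k * m)) := by
  ext j
  simp only [mulVec, dotProduct, hC, Pi.smul_apply, smul_eq_mul, dft_apply, sum_mul]
  refine Fintype.sum_equiv (Equiv.subRight j) _ _ fun k => ?_
  rw [Equiv.subRight_apply, mul_comm (stdAddChar _), mul_assoc, ← AddChar.map_add_eq_mul]
  congr 2
  ring

lemma dft_sq_eq_of_mul_self_eq (hC : ∀ j k, C j k = c (k - j)) {L : ℂ} (hCC : C * C = L • 1)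
    (m : ZMod N) : 𝓕 c m ^ 2 = L := by
  have h := congrArg (· *ᵥ fun k => stdAddChar (-(k * m))) hCC
  simp only [← mulVec_mulVec, mulVec_stdAddChar_eq_dft_smul hC, mulVec_smul, smul_smul,
    smul_mulVec, one_mulVec] at h
  simpa [sq] using congrFun h 0

theorem exists_sq_mul_eq_and_dvd_sq [Fact (1 < N)] (hC : ∀ j k, C j k = c (k - j))
    (hHerm : C.IsHermitian) {d K : ℕ} (hK : K + 1 = d ^ 2 + N) (hc0 : c 0 = d)
    (hunit : ∀ j, j ≠ 0 → ‖c j‖ = 1) (hCC : C * C = (K : ℂ) • 1) :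
    ∃ T : ℕ, T ^ 2 * K = (N * d) ^ 2 ∧ K ∣ N ^ 2 := by
  have hsq := dft_sq_eq_of_mul_self_eq hC hCC
  choose s hs using fun m => exists_intCast_mul_of_sq_eq_sq ((hsq m).trans (hsq 0).symm)
  have htrace : ((∑ m, s m : ℤ) : ℂ) * 𝓕 c 0 = N * d := by
    rw [← hc0, ← sum_dft, Int.cast_sum, sum_mul]
    exact sum_congr rfl fun m _ => (hs m).symm
  have hshift : ((∑ m, s m * s (m + 1) : ℤ) : ℂ) * K = N * (d ^ 2 - 1) := by
    rw [← sum_dft_mul_dft_add_one (apply_neg_eq_conj_of_isHermitian hC hHerm) hc0 hunit,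
      ← hsq 0, Int.cast_sum, sum_mul]
    exact sum_congr rfl fun m _ => by rw [hs m, hs (m + 1)]; push_cast; ring
  refine ⟨(∑ m, s m).natAbs, ?_, Int.natCast_dvd_natCast.mp ⟨N - ∑ m, s m * s (m + 1), ?_⟩⟩
  · have : ((∑ m, s m : ℤ) : ℂ) ^ 2 * K = (N * d) ^ 2 := by
      rw [← hsq 0, ← htrace]
      ring
    zify
    rw [sq_abs]
    exact_mod_cast this
  · have hKc : (K : ℂ) + 1 = d ^ 2 + N := by exact_mod_cast hK
    have : (N : ℂ) ^ 2 = K * (N - ((∑ m, s m * s (m + 1) : ℤ) : ℂ)) := by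
      linear_combination hshift - (N : ℂ) * hKc
    exact_mod_cast this

end Circulant

lemma Nat.Prime.dvd_of_sq_eq_mul {p x m : ℕ} (hp : p.Prime) (h : x ^ 2 = p * m) : p ∣ m := by
  obtain ⟨y, rfl⟩ := hp.dvd_of_dvd_pow ⟨m, h⟩
  exact ⟨y ^ 2, (Nat.eq_of_mul_eq_mul_left hp.pos (by rw [← h]; ring)).symm⟩

lemma eq_add_one_of_dvd_of_sq_mul_eq {p d K T : ℕ} (hp : p.Prime) (hd : d + 1 ≤ p)
    (hK : K + 1 = d ^ 2 + 2 * p) (hdvd : K ∣ (2 * p) ^ 2) (hT : T ^ 2 * K = (2 * p * d) ^ 2) :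
    p = d + 1 := by
  have hp2 := hp.two_le
  have hKle : K ≤ p ^ 2 := by nlinarith
  have hKgt : p < K := by nlinarith
  rw [mul_pow] at hdvd
  obtain ⟨a, b, ha, hb, rfl⟩ := Nat.dvd_mul.mp hdvd
  obtain ⟨i, hi, rfl⟩ := (Nat.dvd_prime_pow hp).mp hb
  have ha' : a = 1 ∨ a = 2 ∨ a = 4 := by
    have := Nat.le_of_dvd (by norm_num) ha
    interval_cases a <;> simp_all
  -- the nine cases `K = a * p ^ i`, ordered by `i = 0, 1, 2`, then by `a = 1, 2, 4`
  interval_cases i <;> rcases ha' with rfl | rfl | rfl <;>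
    try simp only [pow_zero, pow_one, mul_one, one_mul] at hK hKle hKgt hT
  · omega
  · omega
  · have : d ≤ 1 := by nlinarith
    interval_cases d <;> omega
  · omega
  · have hd1 : d = 1 := by nlinarith
    subst hd1
    have : p ∣ 2 := hp.dvd_of_sq_eq_mul (x := T) (by nlinarith)
    have := Nat.le_of_dvd two_pos this
    omega
  · have hd2 : d ^ 2 = 2 * p + 1 := by omega
    have : p ∣ 2 * p + 1 := hd2 ▸ hp.dvd_of_sq_eq_mul (x := T) (by nlinarith)
    exact absurd ((Nat.dvd_add_right (dvd_mul_left p 2)).mp this) hp.not_dvd_one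
  · nlinarith
  · nlinarith
  · nlinarith

theorem stmt11_general (n : ℕ) [NeZero n] (hne : Even n)
    (c : ZMod n → ℂ) (C : Matrix (ZMod n) (ZMod n) ℂ)
    (hC : ∀ j k, C j k = c (k - j))
    (d : ℕ)  (hc0 : c 0 = (d : ℂ))
    (hunit : ∀ j : ZMod n, j ≠ 0 → ‖c j‖ = 1)
    (hHerm : C.IsHermitian)
    (horth : C * C.conjTranspose = (((d : ℝ) ^ 2 + n - 1 : ℝ) : ℂ) • 1)
    (hp : Nat.Prime (n / 2)) :
    n = 2 * d + 2 := by
  obtain ⟨p, rfl⟩ : ∃ p, n = 2 * p := hne.two_dvd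
  rw [Nat.mul_div_cancel_left p two_pos] at hp
  have hp2 := hp.two_le
  have : Fact (1 < 2 * p) := ⟨by omega⟩
  have hK : d ^ 2 + 2 * p - 1 + 1 = d ^ 2 + 2 * p := by omega
  have hCC : C * C = ((d ^ 2 + 2 * p - 1 : ℕ) : ℂ) • 1 := by
    rw [hHerm.eq] at horth
    rw [horth, Nat.cast_sub (by omega)]
    push_cast
    rfl
  have hbound : 2 * d + 2 ≤ 2 * p := by
    have := two_mul_norm_add_two_le_card (g := 1) one_ne_zero hunit
      (by simpa [mul_apply, hC] using congrFun (congrFun hCC 0) 1)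
    rw [hc0, ZMod.card, Complex.norm_natCast] at this
    exact_mod_cast this
  obtain ⟨T, hT, hdvd⟩ := exists_sq_mul_eq_and_dvd_sq hC hHerm hK hc0 hunit hCC
  have := eq_add_one_of_dvd_of_sq_mul_eq hp (by omega) hK hdvd hT
  omega

theorem stmt11 (n : ℕ) [NeZero n] (hn : 2 ≤ n) (hne : Even n)
    (c : ZMod n → ℂ) (C : Matrix (ZMod n) (ZMod n) ℂ)
    (hC : ∀ j k, C j k = c (k - j))
    (d : ℕ)  (hc0 : c 0 = (d : ℂ))
    (hunit : ∀ j : ZMod n, j ≠ 0 → ‖c j‖ = 1)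
    (hHerm : C.IsHermitian)
    (horth : C * C.conjTranspose = (((d : ℝ) ^ 2 + n - 1 : ℝ) : ℂ) • 1)
    (hp : Nat.Prime (n / 2)) :
    n = 2 * d + 2 :=
  stmt11_general n hne c C hC d hc0 hunit hHerm horth hp
end
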